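/- arXiv:2110.14150 — 2 statements merged into one kernel-verified Lean document; each statement's English description precedes it below -/
import Mathlib

section
/- Let Ω be a compact subset of ℝ^d, let μ, ν be Borel probability measures on Ω, and let φ : Ω → ℝ be a bounded continuous function. Suppose that J_1(φ) ≤ J_2(φ) holds for every pair of empirical measures μ_n = (1/n) Σ_{i=1}^n δ_{X_i} and ν_n = (1/n) Σ_{i=1}^n δ_{Y_i} with n ≥ 1, X_i ∈ supp(μ), and Y_i ∈ supp(ν), where J_1(φ) = ∫φ dμ_n − ∫φ dν_n and J_2(φ) = ∫φ dμ_n + ∫φ^c(·;μ_n) dν_n. Then φ satisfies the admissibility condition (con): φ(x) − φ(y) ≤ |x−y| for all x ∈ supp(μ) and y ∈ supp(ν). -/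
open MeasureTheory
open scoped ENNReal

/-- The (topological) support of a measure: the set of points all of whose
neighborhoods have positive measure. -/
def msupport {α : Type*} [TopologicalSpace α] [MeasurableSpace α]
    (μ : Measure α) : Set α :=
  {x | ∀ U ∈ nhds x, 0 < μ U}

/-- The c-transform of `φ` on the support of `η` (cost `c(x,y) = |x - y|`):
`φ^c(y; η) = inf_{x ∈ supp η} (|x - y| - φ(x))`. -/
noncomputable def ctrans {α : Type*} [PseudoMetricSpace α] [MeasurableSpace α]
    (φ : α → ℝ) (η : Measure α) (y : α) : ℝ :=
  ⨅ x : msupport η, (dist (x : α) y - φ x)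

/-- The empirical measure `(1/n) ∑ᵢ δ_{X i}`. -/
noncomputable def empirical {α : Type*} [MeasurableSpace α] {n : ℕ}
    (X : Fin n → α) : Measure α :=
  (n : ℝ≥0∞)⁻¹ • ∑ i, Measure.dirac (X i)

/-- If `J₁(φ) ≤ J₂(φ)` for all empirical measures drawn from the supports of `μ`
and `ν`, then `φ` satisfies the admissibility condition. -/
theorem admissible_of_J1_le_J2 {d : ℕ}
    (Ω : Set (EuclideanSpace ℝ (Fin d))) (hΩ : IsCompact Ω)
    (μ ν : Measure Ω) [IsProbabilityMeasure μ] [IsProbabilityMeasure ν]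
    (φ : Ω → ℝ) (hφc : Continuous φ) (hφb : Bornology.IsBounded (Set.range φ))
    (h : ∀ n : ℕ, 1 ≤ n → ∀ X Y : Fin n → Ω,
      (∀ i, X i ∈ msupport μ) → (∀ i, Y i ∈ msupport ν) →
      ∫ x, φ x ∂(empirical X) - ∫ y, φ y ∂(empirical Y) ≤
        ∫ x, φ x ∂(empirical X) + ∫ y, ctrans φ (empirical X) y ∂(empirical Y)) :
    ∀ x ∈ msupport μ, ∀ y ∈ msupport ν, φ x - φ y ≤ dist x y := by
  intro x hx y hy
  -- empirical of constant family with n = 1 is dirac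
  have hemp : ∀ z : Ω, empirical (fun _ : Fin 1 => z) = Measure.dirac z := by
    intro z
    simp [empirical]
  have key := h 1 le_rfl (fun _ => x) (fun _ => y) (fun _ => hx) (fun _ => hy)
  rw [hemp x, hemp y, integral_dirac, integral_dirac, integral_dirac] at key
  -- key : φ x - φ y ≤ φ x + ctrans φ (dirac x) y
  have hkey : - φ y ≤ ctrans φ (Measure.dirac x) y := by linarith
  -- x is in the support of dirac x
  have hxs : x ∈ msupport (Measure.dirac x : Measure Ω) := by
    intro U hU
    have : (Measure.dirac x : Measure Ω) {x} = 1 := by simp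
    calc (0 : ℝ≥0∞) < 1 := by norm_num
      _ = (Measure.dirac x : Measure Ω) {x} := this.symm
      _ ≤ (Measure.dirac x : Measure Ω) U :=
        measure_mono (Set.singleton_subset_iff.mpr (mem_of_mem_nhds hU))
  -- bound below
  obtain ⟨C, hC⟩ := (Metric.isBounded_iff_subset_closedBall 0).mp hφb
  have hbdd : BddBelow (Set.range fun z : msupport (Measure.dirac x : Measure Ω) =>
      dist (z : Ω) y - φ z) := by
    refine ⟨-C, ?_⟩
    rintro _ ⟨z, rfl⟩
    have : |φ (z : Ω)| ≤ C := by
      have := hC ⟨(z : Ω), rfl⟩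
      simpa [Real.dist_eq] using this
    have h1 : φ (z : Ω) ≤ C := (abs_le.mp this).2
    have h2 : (0 : ℝ) ≤ dist (z : Ω) y := dist_nonneg
    simp only
    linarith
  have hle : ctrans φ (Measure.dirac x) y ≤ dist x y - φ x :=
    ciInf_le hbdd (⟨x, hxs⟩ : msupport (Measure.dirac x : Measure Ω))
  have : dist x y = dist x y := rfl
  have := dist_comm x y
  linarith [hkey, hle]
end

section
/- Let Ω be a compact subset of ℝ^d, let μ, ν be Borel probability measures on Ω, and let φ : Ω → ℝ be a bounded continuous function. Suppose that J_1(φ) ≤ J_3(φ) holds for every pair of empirical measures μ_n = (1/n) Σ_{i=1}^n δ_{X_i} and ν_n = (1/n) Σ_{i=1}^n δ_{Y_i} with n ≥ 1, X_i ∈ supp(μ), and Y_i ∈ supp(ν), where J_1(φ) = ∫φ dμ_n − ∫φ dν_n and J_3(φ) = ∫(−φ)^c(·;ν_n) dμ_n − ∫φ dν_n. Then φ satisfies the admissibility condition (con): φ(x) − φ(y) ≤ |x−y| for all x ∈ supp(μ) and y ∈ supp(ν). -/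
open MeasureTheory
open scoped ENNReal

lemma msupport_dirac {α : Type*} [TopologicalSpace α] [MeasurableSpace α]
    [MeasurableSingletonClass α] [T1Space α] (y : α) :
    msupport (Measure.dirac y) = {y} := by
  ext z
  simp only [msupport, Set.mem_setOf_eq, Set.mem_singleton_iff]
  constructor
  · intro hz
    by_contra hne
    have h1 := hz {y}ᶜ ((isOpen_compl_singleton).mem_nhds (by simpa using hne))
    rw [Measure.dirac_apply' _ (measurableSet_singleton y).compl] at h1
    simp at h1
  · rintro rfl U hU
    rw [Measure.dirac_apply_of_mem (mem_of_mem_nhds hU)]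
    exact zero_lt_one

/-- If `J₁(φ) ≤ J₃(φ)` for all empirical measures drawn from the supports of `μ`
and `ν`, then `φ` satisfies the admissibility condition. -/
theorem admissible_of_J1_le_J3 {d : ℕ}
    (Ω : Set (EuclideanSpace ℝ (Fin d))) (hΩ : IsCompact Ω)
    (μ ν : Measure Ω) [IsProbabilityMeasure μ] [IsProbabilityMeasure ν]
    (φ : Ω → ℝ) (hφc : Continuous φ) (hφb : Bornology.IsBounded (Set.range φ))
    (h : ∀ n : ℕ, 1 ≤ n → ∀ X Y : Fin n → Ω,
      (∀ i, X i ∈ msupport μ) → (∀ i, Y i ∈ msupport ν) →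
      ∫ x, φ x ∂(empirical X) - ∫ y, φ y ∂(empirical Y) ≤
        ∫ x, ctrans (fun z => -φ z) (empirical Y) x ∂(empirical X) -
          ∫ y, φ y ∂(empirical Y)) :
    ∀ x ∈ msupport μ, ∀ y ∈ msupport ν, φ x - φ y ≤ dist x y := by
  intro x hx y hy
  have hemp : ∀ z : Ω, empirical (fun _ : Fin 1 => z) = Measure.dirac z := by
    intro z
    simp [empirical]
  have hkey := h 1 le_rfl (fun _ => x) (fun _ => y) (fun _ => hx) (fun _ => hy)
  rw [hemp x, hemp y] at hkey
  rw [integral_dirac, integral_dirac, integral_dirac] at hkey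
  have hct : ctrans (fun z => -φ z) (Measure.dirac y) x = dist y x + φ y := by
    rw [ctrans, msupport_dirac, ciInf_unique]
    simp
  rw [hct] at hkey
  rw [dist_comm]
  linarith
end
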